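/- Let G be a group and A a normal subgroup such that G/A has no proper abnormal subgroups. If every proper subgroup of A is properly contained in its normalizer in A (normalizer condition), then abnormality is transitive in G: whenever B is abnormal in G and H is abnormal in B, H is abnormal in G. -/

import Mathlib

/-- The conjugate subgroup `H^g = g⁻¹Hg`. -/
def conjSub {G : Type*} [Group G] (g : G) (H : Subgroup G) : Subgroup G :=
  H.map (MulAut.conj g⁻¹).toMonoidHom

/-- `H` is abnormal in `G`: `g ∈ ⟨H, H^g⟩` for every `g ∈ G`. -/
def IsAbnormal {G : Type*} [Group G] (H : Subgroup G) : Prop :=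
  ∀ g : G, g ∈ H ⊔ conjSub g H

/-- `H` is abnormal in the subgroup `B`: `H ≤ B` and `g ∈ ⟨H, H^g⟩` for every `g ∈ B`. -/
def IsAbnormalIn {G : Type*} [Group G] (H B : Subgroup G) : Prop :=
  H ≤ B ∧ ∀ g ∈ B, g ∈ H ⊔ conjSub g H


/-!
Abnormality passes to homomorphic images, so the hypothesis on `G ⧸ A` gives `BA = HA = G`.
Writing `g = h * a` with `h ∈ H` and `a ∈ A`, it remains to show `a ∈ ⟨H, H^a⟩`. Take, by Zorn,
a maximal subgroup `K` with `A ∩ B ≤ K ≤ A`, normalized by `H`, and with `x ∈ ⟨H, H^x⟩` for all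
`x ∈ K` (a patch). Since `⟨H, K⟩ ≥ B` is abnormal, every element normalizing `K` has the property
too, so `N_G(K) ∩ A` is again a patch; maximality gives `N_A(K) = K`, and the normalizer condition
forces `K = A`.
-/

open Subgroup

section Conjugation

variable {G : Type*} [Group G]

theorem mem_conjSub {g x : G} {H : Subgroup G} : x ∈ conjSub g H ↔ g * x * g⁻¹ ∈ H := by
  constructor
  · rintro ⟨h, hh, rfl⟩
    simpa [mul_assoc] using hh
  · intro h
    exact ⟨g * x * g⁻¹, h, by simp [mul_assoc]⟩

theorem conjSub_mono {g : G} {H K : Subgroup G} (h : H ≤ K) : conjSub g H ≤ conjSub g K :=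
  map_mono h

theorem conjSub_sup (g : G) (H K : Subgroup G) :
    conjSub g (H ⊔ K) = conjSub g H ⊔ conjSub g K :=
  map_sup H K _

theorem conjSub_mul (a b : G) (H : Subgroup G) :
    conjSub (a * b) H = conjSub b (conjSub a H) := by
  ext x
  simp only [mem_conjSub, mul_inv_rev, mul_assoc]

theorem conjSub_eq_self_iff {g : G} {K : Subgroup G} : conjSub g K = K ↔ g ∈ normalizer K := by
  rw [← inv_mem_iff, mem_normalizer_iff_map_conj_eq]
  rfl

theorem conjSub_eq_self_of_mem {h : G} {H : Subgroup G} (hh : h ∈ H) : conjSub h H = H :=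
  conjSub_eq_self_iff.2 (le_normalizer hh)

theorem conjSub_normalizer (g : G) (K : Subgroup G) :
    conjSub g (normalizer K) = normalizer (conjSub g K) :=
  map_equiv_normalizer_eq K (MulAut.conj g⁻¹)

theorem map_conjSub {Q : Type*} [Group Q] (f : G →* Q) (g : G) (H : Subgroup G) :
    (conjSub g H).map f = conjSub (f g) (H.map f) := by
  simp only [conjSub, map_map]
  congr 1
  ext x
  simp

end Conjugation

section Abnormal

variable {G : Type*} [Group G]

theorem exists_mul_eq_of_mem_sup_of_le_normalizer {U K : Subgroup G} (h : U ≤ normalizer K)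
    {x : G} (hx : x ∈ U ⊔ K) : ∃ u ∈ U, ∃ k ∈ K, u * k = x := by
  rwa [← SetLike.mem_coe, coe_mul_of_left_le_normalizer_right U K h, Set.mem_mul] at hx

theorem isAbnormalIn_top_iff {H : Subgroup G} : IsAbnormalIn H ⊤ ↔ IsAbnormal H :=
  ⟨fun h g => h.2 g trivial, fun h => ⟨le_top, fun g _ => h g⟩⟩

theorem IsAbnormal.mono {B L : Subgroup G} (hB : IsAbnormal B) (h : B ≤ L) : IsAbnormal L :=
  fun g => sup_le_sup h (conjSub_mono h) (hB g)

theorem IsAbnormalIn.map {Q : Type*} [Group Q] (f : G →* Q) {H B : Subgroup G}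
    (hH : IsAbnormalIn H B) : IsAbnormalIn (H.map f) (B.map f) := by
  refine ⟨map_mono hH.1, ?_⟩
  rintro _ ⟨b, hb, rfl⟩
  rw [← map_conjSub, ← Subgroup.map_sup]
  exact mem_map_of_mem f (hH.2 b hb)

theorem mul_mem_sup_conjSub_iff {H : Subgroup G} {h : G} (hh : h ∈ H) (a : G) :
    h * a ∈ H ⊔ conjSub (h * a) H ↔ a ∈ H ⊔ conjSub a H := by
  rw [conjSub_mul, conjSub_eq_self_of_mem hh]
  exact mul_mem_cancel_left (mem_sup_left hh)

theorem isAbnormal_of_sup_eq_top {H A : Subgroup G} [A.Normal] (hHA : H ⊔ A = ⊤)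
    (hA : ∀ a ∈ A, a ∈ H ⊔ conjSub a H) : IsAbnormal H := by
  intro g
  obtain ⟨h, hh, a, ha, rfl⟩ := mem_sup_of_normal_right.1 (hHA ▸ mem_top g)
  exact (mul_mem_sup_conjSub_iff hh a).2 (hA a ha)

theorem le_sup_inf_of_sup_eq_top {H A B : Subgroup G} [A.Normal] (hHB : H ≤ B)
    (hHA : H ⊔ A = ⊤) : B ≤ H ⊔ (A ⊓ B) := by
  intro b hb
  obtain ⟨h, hh, a, ha, rfl⟩ := mem_sup_of_normal_right.1 (hHA ▸ mem_top b)
  exact mul_mem_sup hh ⟨ha, (mul_mem_cancel_left (hHB hh)).1 hb⟩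

theorem map_mk'_eq_top_iff (A : Subgroup G) [A.Normal] {K : Subgroup G} :
    K.map (QuotientGroup.mk' A) = ⊤ ↔ K ⊔ A = ⊤ := by
  rw [← (comap_injective (QuotientGroup.mk'_surjective A)).eq_iff, comap_map_eq,
    QuotientGroup.ker_mk', comap_top]

theorem sup_eq_top_of_isAbnormalIn (A : Subgroup G) [A.Normal]
    (hquot : ∀ K : Subgroup (G ⧸ A), IsAbnormal K → K = ⊤) {H B : Subgroup G}
    (hH : IsAbnormalIn H B) (hB : B ⊔ A = ⊤) : H ⊔ A = ⊤ := by
  rw [← map_mk'_eq_top_iff] at hB ⊢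
  exact hquot _ (isAbnormalIn_top_iff.1 (hB ▸ hH.map (QuotientGroup.mk' A)))

/-- The heart of the argument: `a = u * k` with `u ∈ ⟨H, H^a⟩` and `k ∈ K`, and the patch
property of `u k u⁻¹` puts `k` into `⟨H^u, H^a⟩ ≤ ⟨H, H^a⟩`. -/
theorem mem_sup_conjSub_of_mem_normalizer {H K : Subgroup G} (hHK : IsAbnormal (H ⊔ K))
    (hH : H ≤ normalizer K) (hK : ∀ x ∈ K, x ∈ H ⊔ conjSub x H) {a : G}
    (ha : a ∈ normalizer K) : a ∈ H ⊔ conjSub a H := by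
  set D := H ⊔ conjSub a H
  have haK : conjSub a K = K := conjSub_eq_self_iff.2 ha
  have hD : D ≤ normalizer K := by
    refine sup_le hH ?_
    calc conjSub a H ≤ conjSub a (normalizer K) := conjSub_mono hH
      _ = normalizer K := by rw [conjSub_normalizer, haK]
  have haDK : a ∈ D ⊔ K := by
    have := hHK a
    rw [conjSub_sup, haK] at this
    exact sup_le (sup_le_sup_right le_sup_left K) (sup_le_sup_right le_sup_right K) this
  obtain ⟨u, hu, k, hk, rfl⟩ := exists_mul_eq_of_mem_sup_of_le_normalizer hD haDK
  have hk' : k ∈ conjSub u H ⊔ conjSub (u * k) H := by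
    have := hK _ ((mem_normalizer_iff.1 (hD hu) k).1 hk)
    rwa [← mem_conjSub, conjSub_sup, ← conjSub_mul, inv_mul_cancel_right] at this
  have huD : conjSub u H ≤ D :=
    (conjSub_mono le_sup_left).trans (conjSub_eq_self_of_mem hu).le
  exact mul_mem hu (sup_le huD le_sup_right hk')

end Abnormal

section Patch

variable {G : Type*} [Group G]

structure IsAbnormalPatch (H A K : Subgroup G) : Prop where
  le : K ≤ A
  le_normalizer : H ≤ normalizer K
  mem_sup_conjSub : ∀ x ∈ K, x ∈ H ⊔ conjSub x H

variable {H A : Subgroup G}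

theorem IsAbnormalIn.isAbnormalPatch_inf [A.Normal] {B : Subgroup G} (hH : IsAbnormalIn H B) :
    IsAbnormalPatch H A (A ⊓ B) where
  le := inf_le_left
  le_normalizer :=
    (le_inf le_normalizer_of_normal (hH.1.trans le_normalizer)).trans
      inf_normalizer_le_normalizer_inf
  mem_sup_conjSub x hx := hH.2 x hx.2

theorem isAbnormalPatch_sSup {c : Set (Subgroup G)} (hne : c.Nonempty)
    (hchain : IsChain (· ≤ ·) c) (hc : ∀ K ∈ c, IsAbnormalPatch H A K) :
    IsAbnormalPatch H A (sSup c) where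
  le := sSup_le fun K hK => (hc K hK).le
  le_normalizer := by
    rw [sSup_eq_iSup']
    exact (le_iInf fun K : c => (hc K.1 K.2).le_normalizer).trans
      (iInf_normalizer_le_normalizer_iSup _)
  mem_sup_conjSub x hx := by
    obtain ⟨K, hK, hxK⟩ := (mem_sSup_of_directedOn hne hchain.directedOn).1 hx
    exact (hc K hK).mem_sup_conjSub x hxK

theorem IsAbnormalPatch.exists_maximal_ge {C : Subgroup G} (hC : IsAbnormalPatch H A C) :
    ∃ K, C ≤ K ∧ Maximal (IsAbnormalPatch H A) K :=
  zorn_le_nonempty₀ {K | IsAbnormalPatch H A K}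
    (fun c hcs hchain y hy => ⟨sSup c, isAbnormalPatch_sSup ⟨y, hy⟩ hchain hcs,
      fun _ => le_sSup⟩) C hC

theorem IsAbnormalPatch.normalizer_inf [A.Normal] {K : Subgroup G} (hK : IsAbnormalPatch H A K)
    (hHK : IsAbnormal (H ⊔ K)) : IsAbnormalPatch H A (normalizer K ⊓ A) where
  le := inf_le_right
  le_normalizer :=
    (le_inf (hK.le_normalizer.trans Subgroup.le_normalizer) le_normalizer_of_normal).trans
      inf_normalizer_le_normalizer_inf
  mem_sup_conjSub _ hx :=
    mem_sup_conjSub_of_mem_normalizer hHK hK.le_normalizer hK.mem_sup_conjSub hx.1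

end Patch

theorem eq_of_normalizer_inf_le {G : Type*} [Group G] {A K : Subgroup G}
    (hnc : ∀ U : Subgroup A, U < ⊤ → U < normalizer (U : Set A)) (hKA : K ≤ A)
    (hK : normalizer K ⊓ A ≤ K) : K = A := by
  have hN : normalizer (K.subgroupOf A) ≤ K.subgroupOf A := by
    rw [← subgroupOf_normalizer_eq hKA]
    exact fun x hx => hK ⟨hx, x.2⟩
  have htop : K.subgroupOf A = ⊤ := by
    by_contra hne
    exact (hnc _ (lt_top_iff_ne_top.2 hne)).not_ge hN
  exact le_antisymm hKA (subgroupOf_eq_top.1 htop)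

theorem abnormality_transitive_of_normalizer_condition {G : Type*} [Group G]
    (A : Subgroup G) [A.Normal]
    (hquot : ∀ K : Subgroup (G ⧸ A), IsAbnormal K → K = ⊤)
    (hnc : ∀ U : Subgroup A, U < ⊤ → U < Subgroup.normalizer (U : Set A))
    (B H : Subgroup G) (hB : IsAbnormal B) (hH : IsAbnormalIn H B) :
    IsAbnormal H := by
  have hBA : B ⊔ A = ⊤ := sup_eq_top_of_isAbnormalIn A hquot (isAbnormalIn_top_iff.2 hB)
    (top_sup_eq A)
  have hHA : H ⊔ A = ⊤ := sup_eq_top_of_isAbnormalIn A hquot hH hBA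
  obtain ⟨K, hCK, hK⟩ := (hH.isAbnormalPatch_inf (A := A)).exists_maximal_ge
  have hHK : IsAbnormal (H ⊔ K) :=
    hB.mono ((le_sup_inf_of_sup_eq_top hH.1 hHA).trans (sup_le_sup_left hCK H))
  have hKA : K = A :=
    eq_of_normalizer_inf_le hnc hK.prop.le
      (hK.le_of_ge (hK.prop.normalizer_inf hHK) (le_inf le_normalizer hK.prop.le))
  refine isAbnormal_of_sup_eq_top hHA fun a ha => ?_
  exact mem_sup_conjSub_of_mem_normalizer hHK hK.prop.le_normalizer hK.prop.mem_sup_conjSub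
    (le_normalizer (hKA ▸ ha))
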